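/- Let M > 0. Let f = h + conj(g) where h and g are analytic on the unit disc D with expansions h(z) = z + ∑_{n=2}^∞ aₙzⁿ and g(z) = ∑_{n=2}^∞ bₙzⁿ, suppose |f(z)| < M for all z ∈ D, and suppose |aₙ| + |bₙ| ≤ 2 for all n ≥ 2 (the case α = 0). Then f is univalent (injective) on D_{ρ₃} with ρ₃ = 1 − √(32M(π + 8M)) / (2(π + 8M)), and the image f(D_{ρ₃}) contains the disc {w ∈ ℂ : |w| < R₃} with R₃ = (π/(4M))·ρ₃ − 2·ρ₃²/(1 − ρ₃). -/

import Mathlib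

/-!
With `f = h + conj g`, the bound `|aₙ| + |bₙ| ≤ 2` controls every term of the series of `f` beyond
the linear one. Estimating `zⁿ - wⁿ` termwise shows that `f - id` is Lipschitz on `|z| ≤ r` with
constant `2 ((1 - r)⁻² - 1)`, and `ρ₃` is exactly the radius where this constant equals `π / (4M)`.
Integrating `f` against `e^{-iθ}` over circles gives the Cauchy estimate `1 = |a₁| ≤ M`, so the
constant is `< 1`: on `D_{ρ₃}` the map `f` is a perturbation of the identity by a contraction, hence
injective and open. Estimating `zⁿ` termwise gives `|f z| ≥ ρ₃ - 2ρ₃²/(1 - ρ₃) ≥ R₃` on the circle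
`|z| = ρ₃`, and an open image of the disc that contains `f 0 = 0` while the image of its boundary
avoids `D_{R₃}` must contain `D_{R₃}`.
-/

open Complex Metric Set Filter Finset
open scoped NNReal ComplexConjugate Real Topology

lemma norm_pow_sub_pow_le {z w : ℂ} {r : ℝ} (hz : ‖z‖ ≤ r) (hw : ‖w‖ ≤ r) (n : ℕ) :
    ‖z ^ n - w ^ n‖ ≤ n * r ^ (n - 1) * ‖z - w‖ := by
  rw [← geom_sum₂_mul, norm_mul]
  gcongr
  calc ‖∑ i ∈ range n, z ^ i * w ^ (n - 1 - i)‖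
      ≤ ∑ i ∈ range n, ‖z ^ i * w ^ (n - 1 - i)‖ := norm_sum_le _ _
    _ ≤ ∑ _i ∈ range n, r ^ (n - 1) := by
        refine sum_le_sum fun i hi => ?_
        have hr : 0 ≤ r := (norm_nonneg z).trans hz
        calc ‖z ^ i * w ^ (n - 1 - i)‖ ≤ r ^ i * r ^ (n - 1 - i) := by
              rw [norm_mul, norm_pow, norm_pow]; gcongr
          _ = r ^ (n - 1) := by rw [← pow_add]; grind
    _ = n * r ^ (n - 1) := by simp

lemma hasSum_nat_add_two_mul_pow {r : ℝ} (h0 : 0 ≤ r) (h1 : r < 1) :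
    HasSum (fun n : ℕ => ((n + 2 : ℕ) : ℝ) * r ^ (n + 1)) (1 / (1 - r) ^ 2 - 1) := by
  have h := hasSum_choose_mul_geometric_of_norm_lt_one 1
    (show ‖r‖ < 1 by rwa [Real.norm_of_nonneg h0])
  rw [← hasSum_nat_add_iff' 1] at h
  simpa [add_assoc, one_add_one_eq_two] using h

lemma hasSum_pow_add_two {r : ℝ} (h0 : 0 ≤ r) (h1 : r < 1) :
    HasSum (fun n : ℕ => r ^ (n + 2)) (r ^ 2 / (1 - r)) := by
  simpa [pow_add, mul_comm, div_eq_mul_inv] using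
    (hasSum_geometric_of_lt_one h0 h1).mul_left (r ^ 2)

lemma norm_sub_sum_range_two_le {a b v : ℕ → ℂ} {w : ℕ → ℝ} {S : ℂ} {C W : ℝ}
    (hcoef : ∀ n, 2 ≤ n → ‖a n‖ + ‖b n‖ ≤ C)
    (hS : HasSum (fun n => a n * v n + conj (b n * v n)) S)
    (hv : ∀ n, 2 ≤ n → ‖v n‖ ≤ w n) (hW : HasSum (fun n => w (n + 2)) W) :
    ‖S - ∑ n ∈ range 2, (a n * v n + conj (b n * v n))‖ ≤ C * W := by
  refine ((hasSum_nat_add_iff' 2).2 hS).norm_le_of_bounded (hW.mul_left C) fun n => ?_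
  have hvn := hv (n + 2) (by omega)
  have hcn := hcoef (n + 2) (by omega)
  calc ‖a (n + 2) * v (n + 2) + conj (b (n + 2) * v (n + 2))‖
      ≤ (‖a (n + 2)‖ + ‖b (n + 2)‖) * ‖v (n + 2)‖ := by
        grw [norm_add_le, RCLike.norm_conj, norm_mul, norm_mul, add_mul]
    _ ≤ C * w (n + 2) :=
        mul_le_mul hcn hvn (norm_nonneg _) ((add_nonneg (norm_nonneg _) (norm_nonneg _)).trans hcn)

lemma integral_exp_int_mul_I (k : ℤ) :
    ∫ θ in (0 : ℝ)..2 * π, exp (k * θ * I) = if k = 0 then 2 * π else 0 := by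
  split_ifs with hk
  · simp [hk]
  have hkI : (k : ℂ) * I ≠ 0 := by simp [hk]
  simp_rw [mul_right_comm _ _ I]
  rw [integral_exp_mul_complex hkI]
  have : exp (k * I * (2 * π)) = 1 := by
    rw [← exp_int_mul_two_pi_mul_I k]; ring_nf
  push_cast
  simp [this]

lemma integral_harmonic_term_circleMap (n : ℕ) (α β : ℂ) (r : ℝ) :
    ∫ θ in (0 : ℝ)..2 * π,
        (α * circleMap 0 r θ ^ n + conj (β * circleMap 0 r θ ^ n)) * exp (-(θ * I)) =
      if n = 1 then 2 * π * α * r else 0 := by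
  have hterm : ∀ θ : ℝ,
      (α * circleMap 0 r θ ^ n + conj (β * circleMap 0 r θ ^ n)) * exp (-(θ * I)) =
        α * r ^ n * exp (((n - 1 : ℤ) : ℂ) * θ * I) +
          conj β * r ^ n * exp (((-n - 1 : ℤ) : ℂ) * θ * I) := by
    intro θ
    have hconj : conj (exp (θ * I)) = exp (-(θ * I)) := by
      rw [← exp_conj, map_mul, conj_ofReal, conj_I, mul_neg]
    have e₁ : exp (((n - 1 : ℤ) : ℂ) * θ * I) = exp (θ * I) ^ n * exp (-(θ * I)) := by
      rw [← exp_nat_mul, ← exp_add]; push_cast; ring_nf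
    have e₂ : exp (((-n - 1 : ℤ) : ℂ) * θ * I) = conj (exp (θ * I)) ^ n * exp (-(θ * I)) := by
      rw [hconj, ← exp_nat_mul, ← exp_add]; push_cast; ring_nf
    rw [e₁, e₂, circleMap_zero]
    simp only [map_mul, map_pow, conj_ofReal]
    ring
  have hint (k : ℤ) :
      IntervalIntegrable (fun θ : ℝ => exp (k * θ * I)) MeasureTheory.volume 0 (2 * π) :=
    (by fun_prop : Continuous _).intervalIntegrable _ _
  simp_rw [hterm]
  rw [intervalIntegral.integral_add ((hint _).const_mul _) ((hint _).const_mul _),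
    intervalIntegral.integral_const_mul, intervalIntegral.integral_const_mul,
    integral_exp_int_mul_I, integral_exp_int_mul_I]
  rw [if_neg (by omega : (-(n : ℤ) - 1) ≠ 0), ofReal_zero, mul_zero, add_zero]
  rcases eq_or_ne n 1 with rfl | hn
  · rw [if_pos rfl, if_pos (by norm_num)]
    push_cast
    ring
  · rw [if_neg hn, if_neg (by omega), ofReal_zero, mul_zero]

theorem ball_subset_image_ball_of_le_dist {E F : Type*} [MetricSpace E] [ProperSpace E]
    [NormedAddCommGroup F] [NormedSpace ℝ F] {f : E → F} {c : E} {ρ R : ℝ} (hρ : 0 < ρ)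
    (hcont : ContinuousOn f (closedBall c ρ)) (hopen : IsOpen (f '' ball c ρ))
    (hsphere : ∀ z ∈ sphere c ρ, R ≤ dist (f z) (f c)) :
    ball (f c) R ⊆ f '' ball c ρ := by
  rcases (ball (f c) R).eq_empty_or_nonempty with hR | hR
  · simp [hR]
  have hclosed : IsClosed (f '' closedBall c ρ) :=
    ((isCompact_closedBall c ρ).image_of_continuousOn hcont).isClosed
  refine (convex_ball (f c) R).isPreconnected.subset_of_closure_inter_subset hopen
    ⟨f c, mem_ball_self (nonempty_ball.1 hR), mem_image_of_mem f (mem_ball_self hρ)⟩ ?_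
  rintro _ ⟨hx, hxR⟩
  obtain ⟨z, hz, rfl⟩ :=
    closure_minimal (image_mono ball_subset_closedBall) hclosed hx
  rw [← ball_union_sphere] at hz
  rcases hz with hz | hz
  · exact mem_image_of_mem f hz
  · exact absurd (hsphere z hz) (not_le.2 hxR)

def HasHarmonicSeries (f : ℂ → ℂ) (a b : ℕ → ℂ) : Prop :=
  ∀ z ∈ ball (0 : ℂ) 1, HasSum (fun n => a n * z ^ n + conj (b n * z ^ n)) (f z)

namespace HasHarmonicSeries

variable {f : ℂ → ℂ} {a b : ℕ → ℂ}

lemma approximatesLinearOn (hf : HasHarmonicSeries f a b) {C : ℝ}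
    (hcoef : ∀ n, 2 ≤ n → ‖a n‖ + ‖b n‖ ≤ C) (ha1 : a 1 = 1) (hb1 : b 1 = 0) {r : ℝ} (hr : r < 1)
    {c : ℝ≥0} (hc : C * (1 / (1 - r) ^ 2 - 1) ≤ c) :
    ApproximatesLinearOn f (ContinuousLinearMap.id ℝ ℂ) (closedBall 0 r) c := by
  intro z hz w hw
  rw [mem_closedBall_zero_iff] at hz hw
  have hS : HasSum (fun n => a n * (z ^ n - w ^ n) + conj (b n * (z ^ n - w ^ n)))
      (f z - f w) := by
    refine ((hf z (mem_ball_zero_iff.2 (hz.trans_lt hr))).sub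
      (hf w (mem_ball_zero_iff.2 (hw.trans_lt hr)))).congr_fun fun n => ?_
    rw [mul_sub, mul_sub, map_sub]
    abel
  have hW := (hasSum_nat_add_two_mul_pow ((norm_nonneg z).trans hz) hr).mul_right ‖z - w‖
  have key := norm_sub_sum_range_two_le (W := (1 / (1 - r) ^ 2 - 1) * ‖z - w‖) hcoef hS
    (fun n _ => norm_pow_sub_pow_le hz hw n) (by simpa using hW)
  have hlin : ∑ n ∈ range 2, (a n * (z ^ n - w ^ n) + conj (b n * (z ^ n - w ^ n))) = z - w := by
    simp [sum_range_succ, ha1, hb1]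
  rw [hlin, ← mul_assoc] at key
  calc ‖f z - f w - ContinuousLinearMap.id ℝ ℂ (z - w)‖
      ≤ C * (1 / (1 - r) ^ 2 - 1) * ‖z - w‖ := key
    _ ≤ c * ‖z - w‖ := by gcongr

lemma norm_sub_self_le (hf : HasHarmonicSeries f a b) {C : ℝ}
    (hcoef : ∀ n, 2 ≤ n → ‖a n‖ + ‖b n‖ ≤ C) (ha0 : a 0 = 0) (ha1 : a 1 = 1) (hb0 : b 0 = 0)
    (hb1 : b 1 = 0) {z : ℂ} (hz : ‖z‖ < 1) :
    ‖f z - z‖ ≤ C * (‖z‖ ^ 2 / (1 - ‖z‖)) := by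
  have key := norm_sub_sum_range_two_le hcoef (hf z (by simpa using hz))
    (fun n _ => (norm_pow z n).le) (hasSum_pow_add_two (norm_nonneg z) hz)
  simpa [sum_range_succ, ha0, ha1, hb0, hb1] using key

lemma norm_coeff_one_mul_le (hf : HasHarmonicSeries f a b) {C M r : ℝ}
    (hC : ∀ n, ‖a n‖ + ‖b n‖ ≤ C)
    (hM : ∀ z ∈ ball (0 : ℂ) 1, ‖f z‖ ≤ M) (hr0 : 0 ≤ r) (hr1 : r < 1) :
    ‖a 1‖ * r ≤ M := by
  have hz : ∀ θ : ℝ, circleMap 0 r θ ∈ ball (0 : ℂ) 1 := fun θ => by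
    simp [abs_of_nonneg hr0, hr1]
  have hexp : ∀ θ : ℝ, ‖exp (-(θ * I))‖ = 1 := fun θ => by
    rw [← neg_mul, ← ofReal_neg, norm_exp_ofReal_mul_I]
  set F : ℕ → ℝ → ℂ := fun n θ =>
    (a n * circleMap 0 r θ ^ n + conj (b n * circleMap 0 r θ ^ n)) * exp (-(θ * I))
  have hF : ∀ n θ, ‖F n θ‖ ≤ C * r ^ n := fun n θ => by
    calc ‖F n θ‖ ≤ (‖a n‖ + ‖b n‖) * r ^ n := by
          simp only [F, norm_mul, hexp, mul_one]
          grw [norm_add_le, RCLike.norm_conj, norm_mul, norm_mul, norm_pow, norm_circleMap_zero,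
            abs_of_nonneg hr0, add_mul]
      _ ≤ C * r ^ n := by gcongr; exact hC n
  have hsum : HasSum (fun n => ∫ θ in (0 : ℝ)..2 * π, F n θ)
      (∫ θ in (0 : ℝ)..2 * π, f (circleMap 0 r θ) * exp (-(θ * I))) :=
    intervalIntegral.hasSum_integral_of_dominated_convergence (fun n _ => C * r ^ n)
      (fun n => (by fun_prop : Continuous (F n)).aestronglyMeasurable)
      (fun n => MeasureTheory.ae_of_all _ fun θ _ => hF n θ)
      (MeasureTheory.ae_of_all _ fun _ _ => (summable_geometric_of_lt_one hr0 hr1).mul_left C)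
      intervalIntegrable_const
      (MeasureTheory.ae_of_all _ fun θ _ => (hf _ (hz θ)).mul_right _)
  have hval : ∫ θ in (0 : ℝ)..2 * π, f (circleMap 0 r θ) * exp (-(θ * I)) = 2 * π * a 1 * r := by
    refine hsum.unique ((hasSum_ite_eq 1 (2 * π * a 1 * r : ℂ)).congr_fun fun n => ?_)
    rw [integral_harmonic_term_circleMap]
    split_ifs with hn
    · rw [hn]
    · rfl
  have hle := intervalIntegral.norm_integral_le_of_norm_le_const (a := 0) (b := 2 * π) (C := M)
    (f := fun θ : ℝ => f (circleMap 0 r θ) * exp (-(θ * I))) fun θ _ => by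
      rw [norm_mul, hexp, mul_one]; exact hM _ (hz θ)
  have hnorm : ‖(2 * π * a 1 * r : ℂ)‖ = 2 * π * (‖a 1‖ * r) := by
    simp only [norm_mul, norm_ofNat, norm_real, Real.norm_of_nonneg hr0,
      Real.norm_of_nonneg Real.pi_pos.le]
    ring
  rw [hval, hnorm, sub_zero, abs_of_pos Real.two_pi_pos, mul_comm M] at hle
  exact le_of_mul_le_mul_left hle Real.two_pi_pos

theorem norm_coeff_one_le (hf : HasHarmonicSeries f a b) {C M : ℝ}
    (hC : ∀ n, ‖a n‖ + ‖b n‖ ≤ C)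
    (hM : ∀ z ∈ ball (0 : ℂ) 1, ‖f z‖ ≤ M) : ‖a 1‖ ≤ M := by
  have hlim : Tendsto (fun r : ℝ => ‖a 1‖ * r) (𝓝[<] 1) (𝓝 (‖a 1‖ * 1)) :=
    ((continuous_const_mul _).tendsto 1).mono_left nhdsWithin_le_nhds
  refine le_of_tendsto (mul_one ‖a 1‖ ▸ hlim) ?_
  filter_upwards [Ioo_mem_nhdsLT zero_lt_one] with r hr
  exact hf.norm_coeff_one_mul_le hC hM hr.1.le hr.2

theorem injOn_ball_and_ball_subset_image (hf : HasHarmonicSeries f a b) {C : ℝ}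
    (hcoef : ∀ n, 2 ≤ n → ‖a n‖ + ‖b n‖ ≤ C) (ha0 : a 0 = 0) (ha1 : a 1 = 1) (hb0 : b 0 = 0)
    (hb1 : b 1 = 0) {ρ : ℝ} (hρ0 : 0 < ρ) (hρ1 : ρ < 1) (hK : C * (1 / (1 - ρ) ^ 2 - 1) < 1) :
    InjOn f (ball 0 ρ) ∧ ball 0 (ρ - C * (ρ ^ 2 / (1 - ρ))) ⊆ f '' ball 0 ρ := by
  set c := (C * (1 / (1 - ρ) ^ 2 - 1)).toNNReal
  have happrox : ApproximatesLinearOn f (ContinuousLinearEquiv.refl ℝ ℂ : ℂ →L[ℝ] ℂ)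
      (closedBall 0 ρ) c :=
    hf.approximatesLinearOn hcoef ha1 hb1 hρ1 (Real.le_coe_toNNReal _)
  have happrox' := happrox.mono_set ball_subset_closedBall
  have hc : c < ‖((ContinuousLinearEquiv.refl ℝ ℂ).symm : ℂ →L[ℝ] ℂ)‖₊⁻¹ := by simpa [c] using hK
  have hf0 : f 0 = 0 := by
    simpa [sub_eq_zero] using hf.norm_sub_self_le hcoef ha0 ha1 hb0 hb1 (z := 0) (by simp)
  refine ⟨happrox'.injOn (Or.inr hc), ?_⟩
  have hopen : IsOpen (f '' ball 0 ρ) := happrox'.open_image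
    (ContinuousLinearEquiv.refl ℝ ℂ).toNonlinearRightInverse isOpen_ball (Or.inr hc)
  have hcover := ball_subset_image_ball_of_le_dist (R := ρ - C * (ρ ^ 2 / (1 - ρ))) hρ0
    happrox.continuousOn hopen fun z hz => ?_
  · rwa [hf0] at hcover
  rw [mem_sphere_zero_iff_norm] at hz
  have hdist := hf.norm_sub_self_le hcoef ha0 ha1 hb0 hb1 (hz.trans_lt hρ1)
  rw [hz] at hdist
  rw [hf0, dist_zero_right]
  linarith [norm_le_norm_add_norm_sub (f z) z]

end HasHarmonicSeries

lemma landau_radius_spec {M ρ : ℝ} (hM : 0 < M)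
    (hρ : ρ = 1 - √(32 * M * (π + 8 * M)) / (2 * (π + 8 * M))) :
    0 < ρ ∧ ρ < 1 ∧ 2 * (1 / (1 - ρ) ^ 2 - 1) = π / (4 * M) := by
  set s := √(32 * M * (π + 8 * M)) / (2 * (π + 8 * M))
  have hs2 : s ^ 2 = 8 * M / (π + 8 * M) := by
    rw [div_pow, Real.sq_sqrt (by positivity)]
    field_simp
    ring
  have hs0 : 0 < s := by positivity
  have hs1 : s ^ 2 < 1 := by rw [hs2, div_lt_one (by positivity)]; linarith [Real.pi_pos]
  refine ⟨by nlinarith, by linarith, ?_⟩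
  rw [hρ, sub_sub_cancel, hs2]
  field_simp
  ring

theorem landau_GkH0_general (M : ℝ)
    (h g : ℂ → ℂ) (a b : ℕ → ℂ)
    (hhsum : ∀ z ∈ Metric.ball (0:ℂ) 1, HasSum (fun n : ℕ => a n * z ^ n) (h z))
    (hgsum : ∀ z ∈ Metric.ball (0:ℂ) 1, HasSum (fun n : ℕ => b n * z ^ n) (g z))
    (ha0 : a 0 = 0) (ha1 : a 1 = 1) (hb0 : b 0 = 0) (hb1 : b 1 = 0)
    (hcoef : ∀ n : ℕ, 2 ≤ n → ‖a n‖ + ‖b n‖ ≤ 2)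
    (hbound : ∀ z ∈ Metric.ball (0:ℂ) 1,
      ‖h z + starRingEnd ℂ (g z)‖ < M) :
    Set.InjOn (fun z => h z + starRingEnd ℂ (g z))
        (Metric.ball 0
          (1 - Real.sqrt (32 * M * (Real.pi + 8 * M)) / (2 * (Real.pi + 8 * M)))) ∧
      Metric.ball (0:ℂ)
          (Real.pi / (4 * M) *
              (1 - Real.sqrt (32 * M * (Real.pi + 8 * M)) / (2 * (Real.pi + 8 * M)))
            - 2 * (1 - Real.sqrt (32 * M * (Real.pi + 8 * M))
                  / (2 * (Real.pi + 8 * M))) ^ 2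
              / (1 - (1 - Real.sqrt (32 * M * (Real.pi + 8 * M))
                  / (2 * (Real.pi + 8 * M))))) ⊆
        (fun z => h z + starRingEnd ℂ (g z)) ''
          (Metric.ball 0
            (1 - Real.sqrt (32 * M * (Real.pi + 8 * M)) / (2 * (Real.pi + 8 * M)))) := by
  have hf : HasHarmonicSeries (fun z => h z + conj (g z)) a b := fun z hz =>
    (hhsum z hz).add (hasSum_conj'.2 (hgsum z hz))
  have hC : ∀ n, ‖a n‖ + ‖b n‖ ≤ 2
    | 0 => by simp [ha0, hb0]
    | 1 => by simp [ha1, hb1]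
    | n + 2 => hcoef (n + 2) (by omega)
  have hM : 1 ≤ M := by simpa [ha1] using hf.norm_coeff_one_le hC fun z hz => (hbound z hz).le
  have hπM : π / (4 * M) < 1 := by
    rw [div_lt_one (by positivity)]; linarith [Real.pi_lt_four]
  set ρ := 1 - √(32 * M * (π + 8 * M)) / (2 * (π + 8 * M)) with hρ
  obtain ⟨hρ0, hρ1, hK⟩ := landau_radius_spec (by linarith) hρ
  obtain ⟨hinj, hcover⟩ :=
    hf.injOn_ball_and_ball_subset_image hcoef ha0 ha1 hb0 hb1 hρ0 hρ1 (hK ▸ hπM)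
  refine ⟨hinj, (ball_subset_ball ?_).trans hcover⟩
  rw [mul_div_assoc]
  exact sub_le_sub_right (mul_le_of_le_one_left hρ0.le hπM.le) _

/-- Landau-type theorem for the case `α = 0`: with `|aₙ| + |bₙ| ≤ 2` for
`n ≥ 2` and `|f| < M`, `f = h + conj g` is injective on `D_{ρ₃}` with
`ρ₃ = 1 - √(32M(π + 8M)) / (2(π + 8M))`, and `f(D_{ρ₃})` contains the disc of
radius `R₃ = (π/(4M)) ρ₃ - 2 ρ₃²/(1 - ρ₃)`. -/
theorem landau_GkH0 (M : ℝ) (hM : 0 < M)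
    (h g : ℂ → ℂ) (a b : ℕ → ℂ)
    (hhsum : ∀ z ∈ Metric.ball (0:ℂ) 1, HasSum (fun n : ℕ => a n * z ^ n) (h z))
    (hgsum : ∀ z ∈ Metric.ball (0:ℂ) 1, HasSum (fun n : ℕ => b n * z ^ n) (g z))
    (ha0 : a 0 = 0) (ha1 : a 1 = 1) (hb0 : b 0 = 0) (hb1 : b 1 = 0)
    (hcoef : ∀ n : ℕ, 2 ≤ n → ‖a n‖ + ‖b n‖ ≤ 2)
    (hbound : ∀ z ∈ Metric.ball (0:ℂ) 1,
      ‖h z + starRingEnd ℂ (g z)‖ < M) :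
    Set.InjOn (fun z => h z + starRingEnd ℂ (g z))
        (Metric.ball 0
          (1 - Real.sqrt (32 * M * (Real.pi + 8 * M)) / (2 * (Real.pi + 8 * M)))) ∧
      Metric.ball (0:ℂ)
          (Real.pi / (4 * M) *
              (1 - Real.sqrt (32 * M * (Real.pi + 8 * M)) / (2 * (Real.pi + 8 * M)))
            - 2 * (1 - Real.sqrt (32 * M * (Real.pi + 8 * M))
                  / (2 * (Real.pi + 8 * M))) ^ 2
              / (1 - (1 - Real.sqrt (32 * M * (Real.pi + 8 * M))
                  / (2 * (Real.pi + 8 * M))))) ⊆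
        (fun z => h z + starRingEnd ℂ (g z)) ''
          (Metric.ball 0
            (1 - Real.sqrt (32 * M * (Real.pi + 8 * M)) / (2 * (Real.pi + 8 * M)))) :=
  landau_GkH0_general M h g a b hhsum hgsum ha0 ha1 hb0 hb1 hcoef hbound
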